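/- In the Boudol–Castellani type system ::₃, the WHILE rule (premises: tst :: l', c ::₃ (l, l'), l' ≤ l; conclusion: (While tst c) ::₃ (l, l')) and the WHILE' rule (premises: tst :: l₀, c ::₃ (l, l'), l₀ ⊔ l' ≤ l; conclusion: (While tst c) ::₃ (l, l₀ ⊔ l')) are interderivable in the presence of the subtyping rule: the system with WHILE derives exactly the same judgments as the system with WHILE'. -/

import Mathlib

/-- Commands of a while language with parallel composition, over variables
and expressions (tests are modeled as expressions). -/
inductive Com (Var Exp : Type) : Type where
  | assign : Var → Exp → Com Var Exp
  | seq    : Com Var Exp → Com Var Exp → Com Var Exp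
  | ite    : Exp → Com Var Exp → Com Var Exp → Com Var Exp
  | while  : Exp → Com Var Exp → Com Var Exp
  | par    : Com Var Exp → Com Var Exp → Com Var Exp

/- Security levels: the two-point lattice L = {lo, hi} is modeled as Bool,
with lo = false, hi = true, so false < true. -/

variable {Var Exp : Type}

/-- minimal type of an expression/test: sup of the levels of its variables. -/
noncomputable def minTp (sec : Var → Bool) (Vars : Exp → Finset Var) (e : Exp) : Bool :=
  (Vars e).sup sec

/-- typing of expressions/tests: `e :: lo` iff all variables of `e` are low; `e :: hi` always. -/
def ETp (sec : Var → Bool) (Vars : Exp → Finset Var) (e : Exp) (l : Bool) : Prop :=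
  l = true ∨ ∀ x ∈ Vars e, sec x = false

/-- maximal write type, Boudol-Castellani. -/
def maxWtp (sec : Var → Bool) : Com Var Exp → Bool
  | .assign x _ => sec x
  | .seq c1 c2  => maxWtp sec c1 ⊓ maxWtp sec c2
  | .ite _ c1 c2 => maxWtp sec c1 ⊓ maxWtp sec c2
  | .while _ c  => maxWtp sec c
  | .par c1 c2  => maxWtp sec c1 ⊓ maxWtp sec c2

/-- minimal read type, Boudol-Castellani. -/
noncomputable def minRtp (sec : Var → Bool) (Vars : Exp → Finset Var) : Com Var Exp → Bool
  | .assign _ _ => false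
  | .seq c1 c2  => minRtp sec Vars c1 ⊔ minRtp sec Vars c2
  | .ite t c1 c2 => minTp sec Vars t ⊔ minRtp sec Vars c1 ⊔ minRtp sec Vars c2
  | .while t c  => minTp sec Vars t ⊔ minRtp sec Vars c
  | .par c1 c2  => minRtp sec Vars c1 ⊔ minRtp sec Vars c2

/-- Boudol-Castellani safety predicate. -/
noncomputable def safe3 (sec : Var → Bool) (Vars : Exp → Finset Var) : Com Var Exp → Prop
  | .assign x e => minTp sec Vars e ≤ sec x
  | .seq c1 c2  => safe3 sec Vars c1 ∧ safe3 sec Vars c2 ∧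
      minRtp sec Vars c1 ≤ maxWtp sec c2
  | .ite t c1 c2 => safe3 sec Vars c1 ∧ safe3 sec Vars c2 ∧
      minTp sec Vars t ≤ maxWtp sec c1 ⊓ maxWtp sec c2
  | .while t c  => safe3 sec Vars c ∧
      (minTp sec Vars t ⊔ minRtp sec Vars c) ≤ maxWtp sec c
  | .par c1 c2  => safe3 sec Vars c1 ∧ safe3 sec Vars c2

/-- The Boudol-Castellani type system `::₃`. -/
inductive Tp3 (sec : Var → Bool) (Vars : Exp → Finset Var) :
    Com Var Exp → Bool → Bool → Prop where
  | assign {x e l l'} : sec x = l → ETp sec Vars e l → Tp3 sec Vars (.assign x e) l l'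
  | compose {c1 c2 l1 l1' l2 l2'} : Tp3 sec Vars c1 l1 l1' → Tp3 sec Vars c2 l2 l2' →
      l1' ≤ l2 → Tp3 sec Vars (.seq c1 c2) (l1 ⊓ l2) (l1' ⊔ l2')
  | if_ {t c1 c2 l0 l l'} : ETp sec Vars t l0 → Tp3 sec Vars c1 l l' →
      Tp3 sec Vars c2 l l' → l0 ≤ l → Tp3 sec Vars (.ite t c1 c2) l (l0 ⊔ l')
  | while_ {t c l l'} : ETp sec Vars t l' → Tp3 sec Vars c l l' → l' ≤ l →
      Tp3 sec Vars (.while t c) l l'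
  | par {c1 c2 l l'} : Tp3 sec Vars c1 l l' → Tp3 sec Vars c2 l l' →
      Tp3 sec Vars (.par c1 c2) l l'
  | subtype {c l1 l1' l2 l2'} : Tp3 sec Vars c l1 l1' → l2 ≤ l1 → l1' ≤ l2' →
      Tp3 sec Vars c l2 l2'

/-- The Boudol-Castellani type system with the (WHILE') rule instead of (WHILE). -/
inductive Tp3' (sec : Var → Bool) (Vars : Exp → Finset Var) :
    Com Var Exp → Bool → Bool → Prop where
  | assign {x e l l'} : sec x = l → ETp sec Vars e l → Tp3' sec Vars (.assign x e) l l'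
  | compose {c1 c2 l1 l1' l2 l2'} : Tp3' sec Vars c1 l1 l1' → Tp3' sec Vars c2 l2 l2' →
      l1' ≤ l2 → Tp3' sec Vars (.seq c1 c2) (l1 ⊓ l2) (l1' ⊔ l2')
  | if_ {t c1 c2 l0 l l'} : ETp sec Vars t l0 → Tp3' sec Vars c1 l l' →
      Tp3' sec Vars c2 l l' → l0 ≤ l → Tp3' sec Vars (.ite t c1 c2) l (l0 ⊔ l')
  | while' {t c l0 l l'} : ETp sec Vars t l0 → Tp3' sec Vars c l l' → l0 ⊔ l' ≤ l →
      Tp3' sec Vars (.while t c) l (l0 ⊔ l')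
  | par {c1 c2 l l'} : Tp3' sec Vars c1 l l' → Tp3' sec Vars c2 l l' →
      Tp3' sec Vars (.par c1 c2) l l'
  | subtype {c l1 l1' l2 l2'} : Tp3' sec Vars c l1 l1' → l2 ≤ l1 → l1' ≤ l2' →
      Tp3' sec Vars c l2 l2'

/-! WHILE is the instance `l₀ = l'` of WHILE', as `l' ⊔ l' = l'`. Conversely, WHILE' is WHILE at
the level `l₀ ⊔ l'`, once the body's second level is raised to `l₀ ⊔ l'` by subtyping and the
test is retyped at `l₀ ⊔ l'` (expression typing is monotone). -/

section

variable {sec : Var → Bool} {Vars : Exp → Finset Var}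

theorem ETp.mono {e : Exp} {l l' : Bool} (h : ETp sec Vars e l) (hl : l ≤ l') :
    ETp sec Vars e l' := by
  rcases h with rfl | hlow
  · exact Or.inl (top_le_iff.mp hl)
  · exact Or.inr hlow

theorem Tp3.while' {t : Exp} {c : Com Var Exp} {l₀ l l' : Bool} (ht : ETp sec Vars t l₀)
    (hc : Tp3 sec Vars c l l') (hle : l₀ ⊔ l' ≤ l) :
    Tp3 sec Vars (.while t c) l (l₀ ⊔ l') :=
  .while_ (ht.mono le_sup_left) (.subtype hc le_rfl le_sup_right) hle

theorem Tp3'.while_ {t : Exp} {c : Com Var Exp} {l l' : Bool} (ht : ETp sec Vars t l')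
    (hc : Tp3' sec Vars c l l') (hle : l' ≤ l) :
    Tp3' sec Vars (.while t c) l l' := by
  simpa only [sup_idem] using Tp3'.while' ht hc (by rwa [sup_idem])

theorem Tp3.toTp3' {c : Com Var Exp} {l l' : Bool} (h : Tp3 sec Vars c l l') :
    Tp3' sec Vars c l l' := by
  induction h with
  | assign hx he => exact .assign hx he
  | compose _ _ hle ih₁ ih₂ => exact .compose ih₁ ih₂ hle
  | if_ ht _ _ hle ih₁ ih₂ => exact .if_ ht ih₁ ih₂ hle
  | while_ ht _ hle ih => exact .while_ ht ih hle
  | par _ _ ih₁ ih₂ => exact .par ih₁ ih₂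
  | subtype _ hl hl' ih => exact .subtype ih hl hl'

theorem Tp3'.toTp3 {c : Com Var Exp} {l l' : Bool} (h : Tp3' sec Vars c l l') :
    Tp3 sec Vars c l l' := by
  induction h with
  | assign hx he => exact .assign hx he
  | compose _ _ hle ih₁ ih₂ => exact .compose ih₁ ih₂ hle
  | if_ ht _ _ hle ih₁ ih₂ => exact .if_ ht ih₁ ih₂ hle
  | while' ht _ hle ih => exact .while' ht ih hle
  | par _ _ ih₁ ih₂ => exact .par ih₁ ih₂
  | subtype _ hl hl' ih => exact .subtype ih hl hl'

end

theorem tp3_while_while'_interderivable (sec : Var → Bool) (Vars : Exp → Finset Var)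
    (c : Com Var Exp) (l l' : Bool) :
    Tp3 sec Vars c l l' ↔ Tp3' sec Vars c l l' :=
  ⟨Tp3.toTp3', Tp3'.toTp3⟩
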